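/- For every nonnegative integer n, D(n + 2^(m+1)) = 2n − 2^m · τ(ξ) + 1, where m = ⌊log₂(n+1)⌋ and ξ = (n+1)/2^m − 1. -/

import Mathlib

/-- f m = (#1 digits) - (#0 digits) in the binary expansion of m. -/
def f (m : ℕ) : ℤ :=
  2 * ((Nat.digits 2 m).count 1 : ℤ) - ((Nat.digits 2 m).length : ℤ)

/-- Cumulated deficient binary digit sum (OEIS A268289), D 0 = 0. -/
def D (n : ℕ) : ℤ := ∑ m ∈ Finset.Icc 1 n, f m

/-- Distance from y to the nearest integer. -/
noncomputable def s (y : ℝ) : ℝ := |y - round y|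

/-- The Takagi function. -/
noncomputable def τ (x : ℝ) : ℝ := ∑' n : ℕ, s (2 ^ n * x) / 2 ^ n

/-!
Appending a binary digit gives `f (2m+1) = f m + 1` and `f (2m) = f m - 1`, whence
`D (2n+1) = 2 D n + 1` and `D (2n+2) = D n + D (n+1)`. On the other side, `τ x = s x + τ (2x) / 2`
and `s` is affine between consecutive half-integers, so at the midpoint of a dyadic interval of
length `2⁻ᵏ` the Takagi function exceeds the average of its endpoint values by exactly `2⁻⁽ᵏ⁺¹⁾`.
These two recursions match, and the formula follows by induction on `m`, proved for all `n` with
`2 ^ m ≤ n + 1 ≤ 2 ^ (m + 1)` at once (the periodicity of `τ` absorbs the shift by `1` in `ξ`).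
-/

lemma f_two_mul_add_one (m : ℕ) : f (2 * m + 1) = f m + 1 := by
  have h := Nat.digits_add 2 one_lt_two 1 m one_lt_two (.inl one_ne_zero)
  rw [add_comm 1] at h
  simp only [f, h, List.count_cons_self, List.length_cons]
  push_cast
  ring

lemma f_two_mul {m : ℕ} (hm : m ≠ 0) : f (2 * m) = f m - 1 := by
  have h := Nat.digits_add 2 one_lt_two 0 m two_pos (.inr hm)
  rw [zero_add] at h
  simp only [f, h, List.count_cons_of_ne zero_ne_one, List.length_cons]
  push_cast
  ring

lemma D_succ (n : ℕ) : D (n + 1) = D n + f (n + 1) :=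
  Finset.sum_Icc_succ_top (by omega) f

lemma D_two_mul_add_one (n : ℕ) : D (2 * n + 1) = 2 * D n + 1 := by
  induction n with
  | zero => simp [D, f]
  | succ n ih =>
    have h : D (2 * (n + 1)) = D (2 * n + 1) + f (2 * (n + 1)) := D_succ (2 * n + 1)
    rw [D_succ, h, ih, f_two_mul_add_one, f_two_mul n.succ_ne_zero, D_succ]
    ring

lemma D_two_mul_add_two (n : ℕ) : D (2 * n + 2) = D n + D (n + 1) := by
  have h : f (2 * n + 2) = f (n + 1) - 1 := f_two_mul n.succ_ne_zero
  rw [D_succ, D_two_mul_add_one, h, D_succ]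
  ring

lemma s_intCast (k : ℤ) : s k = 0 := by simp [s]

lemma s_periodic : Function.Periodic s 1 := fun y => by
  simp only [s]
  rw [← Int.cast_one, round_add_intCast]
  push_cast
  ring_nf

lemma s_eq_min_of_mem {y : ℝ} {q : ℤ} (h₀ : (q : ℝ) ≤ y) (h₁ : y ≤ q + 1) :
    s y = min (y - q) (q + 1 - y) := by
  apply le_antisymm
  · refine le_min ((round_le y q).trans_eq (abs_of_nonneg (by linarith))) ?_
    refine (round_le y (q + 1)).trans_eq ?_
    rw [abs_of_nonpos (by push_cast; linarith)]
    push_cast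
    ring
  · rcases le_or_gt (round y) q with h | h
    · have : (round y : ℝ) ≤ q := by exact_mod_cast h
      exact (min_le_left _ _).trans ((le_abs_self _).trans' (by linarith))
    · have : (q : ℝ) + 1 ≤ round y := by exact_mod_cast h
      exact (min_le_right _ _).trans ((neg_le_abs _).trans' (by linarith))

lemma s_midpoint {a b : ℝ} {i : ℤ} (ha : i / 2 ≤ a) (hab : a ≤ b) (hb : b ≤ (i + 1) / 2) :
    s ((a + b) / 2) = (s a + s b) / 2 := by
  obtain ⟨q, rfl | rfl⟩ := Int.even_or_odd' i <;> push_cast at ha hb <;>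
    rw [s_eq_min_of_mem (q := q) (by linarith) (by linarith),
      s_eq_min_of_mem (q := q) (by linarith) (by linarith),
      s_eq_min_of_mem (q := q) (by linarith) (by linarith)]
  · rw [min_eq_left (by linarith), min_eq_left (by linarith), min_eq_left (by linarith)]
    ring
  · rw [min_eq_right (by linarith), min_eq_right (by linarith), min_eq_right (by linarith)]
    ring

lemma summable_takagi (x : ℝ) : Summable fun n : ℕ => s (2 ^ n * x) / 2 ^ n := by
  refine Summable.of_nonneg_of_le (fun n => by unfold s; positivity) (fun n => ?_)
    summable_geometric_two
  rw [one_div, inv_pow, div_eq_mul_inv]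
  exact mul_le_of_le_one_left (by positivity) ((abs_sub_round _).trans (by norm_num))

lemma tau_eq_s_add_tau_two_mul (x : ℝ) : τ x = s x + τ (2 * x) / 2 := by
  rw [τ, (summable_takagi x).tsum_eq_zero_add, τ, ← tsum_div_const]
  congr 1
  · simp
  · congr 1 with n
    rw [pow_succ, mul_assoc, div_div]

lemma tau_intCast (k : ℤ) : τ k = 0 := by
  simp only [τ]
  convert tsum_zero with n
  rw [show (2 : ℝ) ^ n * k = ((2 ^ n * k : ℤ) : ℝ) by push_cast; ring, s_intCast, zero_div]

lemma tau_periodic : Function.Periodic τ 1 := fun x => by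
  simp only [τ, mul_add, mul_one]
  congr 1 with n
  rw [show ((2 : ℝ) ^ n) = ((2 ^ n : ℕ) : ℝ) * 1 by push_cast; ring, (s_periodic.nat_mul _) _]

theorem tau_dyadic_midpoint (k : ℕ) (j : ℤ) :
    τ ((2 * j + 1) / 2 ^ (k + 1)) =
      (τ (j / 2 ^ k) + τ ((j + 1) / 2 ^ k)) / 2 + 1 / 2 ^ (k + 1) := by
  induction k generalizing j with
  | zero =>
    have hs : s ((2 * j + 1) / 2) = 1 / 2 := by
      rw [s_eq_min_of_mem (q := j) (by linarith) (by linarith)]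
      ring_nf
      exact min_self _
    have h₁ : τ (j + 1) = 0 := by exact_mod_cast tau_intCast (j + 1)
    have h₂ : τ (2 * j + 1) = 0 := by exact_mod_cast tau_intCast (2 * j + 1)
    simp only [zero_add, pow_one, pow_zero, div_one]
    rw [tau_eq_s_add_tau_two_mul, hs, mul_div_cancel₀ _ two_ne_zero, tau_intCast, h₁, h₂]
    norm_num
  | succ k ih =>
    set a : ℝ := j / 2 ^ (k + 1)
    set b : ℝ := (j + 1) / 2 ^ (k + 1)
    have hmid : (2 * j + 1 : ℝ) / 2 ^ (k + 1 + 1) = (a + b) / 2 := by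
      simp only [a, b, pow_succ]; field_simp; ring
    have h2a : 2 * a = j / 2 ^ k := by simp only [a, pow_succ]; field_simp
    have h2b : 2 * b = (j + 1) / 2 ^ k := by simp only [b, pow_succ]; field_simp
    have h2m : 2 * ((a + b) / 2) = (2 * j + 1) / 2 ^ (k + 1) := by
      simp only [a, b, pow_succ]; field_simp; ring
    -- `[a, b]` lies in `[i / 2, (i + 1) / 2]` for `i = ⌊j / 2 ^ k⌋`, where `s` is affine.
    obtain ⟨i, r, hj, hr₀, hr₁⟩ : ∃ i r : ℤ, j = 2 ^ k * i + r ∧ 0 ≤ r ∧ r + 1 ≤ 2 ^ k :=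
      ⟨j / 2 ^ k, j % 2 ^ k, (Int.mul_ediv_add_emod j _).symm, Int.emod_nonneg _ (by positivity),
        Int.emod_lt_of_pos _ (by positivity)⟩
    have hs : s ((a + b) / 2) = (s a + s b) / 2 := by
      have hj' : (j : ℝ) = 2 ^ k * i + r := by exact_mod_cast hj
      have hr₀' : (0 : ℝ) ≤ r := by exact_mod_cast hr₀
      have hr₁' : (r : ℝ) + 1 ≤ 2 ^ k := by exact_mod_cast hr₁
      refine s_midpoint (i := i) ?_ ?_ ?_
      · simp only [a, hj', pow_succ]
        rw [div_le_div_iff₀ (by positivity) (by positivity)]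
        nlinarith
      · simp only [a, b]
        gcongr
        linarith
      · simp only [b, hj', pow_succ]
        rw [div_le_div_iff₀ (by positivity) (by positivity)]
        nlinarith
    rw [hmid, tau_eq_s_add_tau_two_mul, tau_eq_s_add_tau_two_mul a, tau_eq_s_add_tau_two_mul b,
      h2m, ih, h2a, h2b, hs, pow_succ _ (k + 1)]
    ring

theorem D_add_two_pow_succ (k n : ℕ) (h₁ : 2 ^ k ≤ n + 1) (h₂ : n + 1 ≤ 2 ^ (k + 1)) :
    (D (n + 2 ^ (k + 1)) : ℝ) = 2 * n + 1 - 2 ^ k * τ ((n + 1) / 2 ^ k) := by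
  induction k generalizing n with
  | zero =>
    have hD₀ : D 0 = 0 := by simp [D]
    have hD₁ : D 1 = 1 := by simpa [hD₀] using D_two_mul_add_one 0
    have hτ₁ : τ 1 = 0 := by exact_mod_cast tau_intCast 1
    have hτ₂ : τ 2 = 0 := by exact_mod_cast tau_intCast 2
    obtain rfl | rfl : n = 0 ∨ n = 1 := by omega
    · simpa [hD₀, hD₁, hτ₁] using D_two_mul_add_two 0
    · norm_num [hD₁, hτ₂, D_two_mul_add_one 1]
  | succ k ih =>
    rw [pow_succ] at h₁ h₂
    obtain ⟨p, rfl | rfl⟩ := Nat.even_or_odd' n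
    · obtain ⟨p, rfl⟩ : ∃ q, p = q + 1 := ⟨p - 1, by have := Nat.one_le_two_pow (n := k); omega⟩
      have hp := ih p (by omega) (by omega)
      have hp₁ := ih (p + 1) (by omega) (by omega)
      have hmid := tau_dyadic_midpoint k (p + 1)
      rw [show 2 * (p + 1) + 2 ^ (k + 1 + 1) = 2 * (p + 2 ^ (k + 1)) + 2 by ring,
        D_two_mul_add_two, Int.cast_add, hp, add_right_comm, hp₁]
      push_cast at hmid ⊢
      rw [hmid, pow_succ]
      field_simp
      ring
    · rw [show 2 * p + 1 + 2 ^ (k + 1 + 1) = 2 * (p + 2 ^ (k + 1)) + 1 by ring,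
        D_two_mul_add_one, Int.cast_add, Int.cast_mul, ih p (by omega) (by omega)]
      push_cast
      rw [show (2 * p + 1 + 1 : ℝ) / 2 ^ (k + 1) = (p + 1) / 2 ^ k by rw [pow_succ]; field_simp; ring]
      ring

theorem stmt_10 (n : ℕ) :
    (D (n + 2 ^ (Nat.log 2 (n + 1) + 1)) : ℝ) =
      2 * n - 2 ^ Nat.log 2 (n + 1) * τ ((n + 1) / 2 ^ Nat.log 2 (n + 1) - 1) + 1 := by
  rw [D_add_two_pow_succ _ n (Nat.pow_log_le_self 2 n.succ_ne_zero)
    (Nat.lt_pow_succ_log_self one_lt_two (n + 1)).le, tau_periodic.sub_eq]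
  ring
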